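/- arXiv:2007.15618 — 5 statements merged into one kernel-verified Lean document; each statement's English description precedes it below -/
import Mathlib

section
/- Let 0 ≤ ε ≤ δ, ε ≤ 1/2, and let S ⊂ ℝ^d be a finite set satisfying for all unit vectors v: (1) ‖μ_S − μ‖ ≤ δ, (2) v^T Σ̄_S v ≤ 1 + δ²/ε, and (3) for all subsets S' ⊆ S with |S'| ≥ (1−ε)|S|, v^T Σ̄_{S'} v ≥ 1 − δ²/ε. Then S is (ε, 7δ)-stable with respect to μ and σ² = 1. -/
open Finset

noncomputable def sampleMean {d n : ℕ} (x : Fin n → EuclideanSpace ℝ (Fin d))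
    (S : Finset (Fin n)) : EuclideanSpace ℝ (Fin d) :=
  (S.card : ℝ)⁻¹ • ∑ i ∈ S, x i

/-- `v ↦ vᵀ Σ̄_S v`, the quadratic form of the second moment matrix of `S` centered at `μ`. -/
noncomputable def qForm {d n : ℕ} (x : Fin n → EuclideanSpace ℝ (Fin d))
    (S : Finset (Fin n)) (μ v : EuclideanSpace ℝ (Fin d)) : ℝ :=
  (S.card : ℝ)⁻¹ * ∑ i ∈ S, (inner ℝ v (x i - μ) : ℝ) ^ 2

/-- `S` is `(ε, δ)`-stable with respect to `μ` and `σ²`: for every `S' ⊆ S` with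
`|S'| ≥ (1-ε)|S|`, the mean of `S'` is `σδ`-close to `μ` and the centered second moment
matrix is within `σ²δ²/ε` of `σ² I` in spectral norm (expressed via quadratic forms). -/
def IsStable {d n : ℕ} (x : Fin n → EuclideanSpace ℝ (Fin d)) (S : Finset (Fin n))
    (μ : EuclideanSpace ℝ (Fin d)) (σ ε δ : ℝ) : Prop :=
  ∀ S' ⊆ S, (1 - ε) * (S.card : ℝ) ≤ (S'.card : ℝ) →
    ‖sampleMean x S' - μ‖ ≤ σ * δ ∧
    ∀ v : EuclideanSpace ℝ (Fin d), ‖v‖ = 1 →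
      |qForm x S' μ v - σ ^ 2| ≤ σ ^ 2 * δ ^ 2 / ε

/-!
Fix a unit vector `v` and put `aᵢ = ⟪v, xᵢ - μ⟫`. If `S' ⊆ S` misses at most `ε|S|` points, the
second moment of the removed points is at most the gap between the upper bound on `S` and the
lower bound on `S'`, namely `|S| (ε + 2δ²/ε)`; by Cauchy–Schwarz their sum is then at most
`2|S|δ`, so `|∑_{S'} aᵢ| ≤ 3|S|δ ≤ 6|S'|δ`, which bounds the mean of `S'`. For the second moment
the lower bound is assumed, and the upper bound follows from `|S'| qForm S' ≤ |S| qForm S`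
and `|S| ≤ |S'| / (1 - ε)`.
-/

open scoped RealInnerProductSpace

lemma le_sq_div_self {ε δ : ℝ} (hε0 : 0 ≤ ε) (hεδ : ε ≤ δ) : ε ≤ δ ^ 2 / ε := by
  rcases hε0.eq_or_lt with rfl | hε
  · simp
  · rw [le_div_iff₀ hε]; nlinarith

lemma mul_sq_div_self_le (ε δ : ℝ) : ε * (δ ^ 2 / ε) ≤ δ ^ 2 := by
  rcases eq_or_ne ε 0 with rfl | hε
  · simpa using sq_nonneg δ
  · rw [mul_div_cancel₀ _ hε]

lemma norm_le_of_forall_unit_inner_le {E : Type*} [NormedAddCommGroup E] [InnerProductSpace ℝ E]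
    {w : E} {c : ℝ} (hc : 0 ≤ c) (h : ∀ v : E, ‖v‖ = 1 → ⟪v, w⟫ ≤ c) : ‖w‖ ≤ c := by
  rcases eq_or_ne w 0 with rfl | hw
  · simpa using hc
  · have hw' : ‖w‖ ≠ 0 := norm_ne_zero_iff.mpr hw
    have hunit : ‖‖w‖⁻¹ • w‖ = 1 := by
      rw [norm_smul, norm_inv, norm_norm, inv_mul_cancel₀ hw']
    calc ‖w‖ = ⟪‖w‖⁻¹ • w, w⟫ := by
          rw [real_inner_smul_left, real_inner_self_eq_norm_sq]; field_simp
      _ ≤ c := h _ hunit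

section Scalar

variable {ι : Type*} [DecidableEq ι] {S S' : Finset ι}

lemma sq_sum_sdiff_le_card_mul (a : ι → ℝ) (hsub : S' ⊆ S) :
    (∑ i ∈ S \ S', a i) ^ 2 ≤ #(S \ S') * (∑ i ∈ S, a i ^ 2 - ∑ i ∈ S', a i ^ 2) := by
  rw [← sum_sdiff_eq_sub hsub]
  exact sq_sum_le_card_mul_sum_sq

lemma abs_sum_subset_le (a : ι → ℝ) (hsub : S' ⊆ S) {ε δ : ℝ} (hε0 : 0 ≤ ε) (hεδ : ε ≤ δ)
    (hcard : (1 - ε) * #S ≤ #S')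
    (hmean : |∑ i ∈ S, a i| ≤ #S * δ)
    (hub : ∑ i ∈ S, a i ^ 2 ≤ #S * (1 + δ ^ 2 / ε))
    (hlb : #S' * (1 - δ ^ 2 / ε) ≤ ∑ i ∈ S', a i ^ 2) :
    |∑ i ∈ S', a i| ≤ 3 * #S * δ := by
  set t := δ ^ 2 / ε
  have hδ : 0 ≤ δ := hε0.trans hεδ
  have ht : 0 ≤ t := by positivity
  have hN : (0 : ℝ) ≤ #S := Nat.cast_nonneg _
  have hmN : (#S' : ℝ) ≤ #S := by exact_mod_cast card_le_card hsub
  have hremoved_card : (#(S \ S') : ℝ) ≤ ε * #S := by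
    rw [card_sdiff_of_subset hsub, Nat.cast_sub (card_le_card hsub)]; linarith
  have hremoved_sq : ∑ i ∈ S, a i ^ 2 - ∑ i ∈ S', a i ^ 2 ≤ #S * (ε + 2 * t) := by
    nlinarith [mul_le_mul_of_nonneg_left hmN ht]
  have hremoved : |∑ i ∈ S \ S', a i| ≤ 2 * #S * δ := by
    refine abs_le_of_sq_le_sq ?_ (by positivity)
    calc (∑ i ∈ S \ S', a i) ^ 2
        ≤ #(S \ S') * (∑ i ∈ S, a i ^ 2 - ∑ i ∈ S', a i ^ 2) := sq_sum_sdiff_le_card_mul a hsub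
      _ ≤ (ε * #S) * (#S * (ε + 2 * t)) :=
          mul_le_mul hremoved_card hremoved_sq
            (sub_nonneg.mpr (sum_le_sum_of_subset_of_nonneg hsub fun i _ _ => sq_nonneg _))
            (by positivity)
      _ = #S ^ 2 * (ε * ε + 2 * (ε * t)) := by ring
      _ ≤ #S ^ 2 * (δ ^ 2 + 2 * δ ^ 2) := by
          gcongr
          · exact mul_self_le_mul_self hε0 hεδ |>.trans_eq (sq δ).symm
          · exact mul_sq_div_self_le ε δ
      _ ≤ (2 * #S * δ) ^ 2 := by nlinarith [sq_nonneg ((#S : ℝ) * δ)]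
  have hsplit : ∑ i ∈ S', a i = ∑ i ∈ S, a i - ∑ i ∈ S \ S', a i := by
    rw [sum_sdiff_eq_sub hsub]; ring
  rw [hsplit]
  calc |∑ i ∈ S, a i - ∑ i ∈ S \ S', a i| ≤ |∑ i ∈ S, a i| + |∑ i ∈ S \ S', a i| := abs_sub _ _
    _ ≤ 3 * #S * δ := by linarith

end Scalar

section Moments

variable {d n : ℕ} (x : Fin n → EuclideanSpace ℝ (Fin d)) (μ : EuclideanSpace ℝ (Fin d))

lemma card_mul_qForm (T : Finset (Fin n)) (v : EuclideanSpace ℝ (Fin d)) :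
    #T * qForm x T μ v = ∑ i ∈ T, ⟪v, x i - μ⟫ ^ 2 := by
  rcases T.eq_empty_or_nonempty with rfl | hT
  · simp [qForm]
  · rw [qForm, ← mul_assoc, mul_inv_cancel₀ (by simpa using hT.ne_empty), one_mul]

lemma card_mul_inner_sampleMean_sub (T : Finset (Fin n)) (v : EuclideanSpace ℝ (Fin d)) :
    #T * ⟪v, sampleMean x T - μ⟫ = ∑ i ∈ T, ⟪v, x i - μ⟫ := by
  rcases T.eq_empty_or_nonempty with rfl | hT
  · simp
  · have hT : (#T : ℝ) ≠ 0 := by simpa using hT.ne_empty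
    simp only [sampleMean, inner_sub_right, inner_smul_right, inner_sum, sum_sub_distrib,
      sum_const, nsmul_eq_mul]
    field_simp

lemma abs_sum_inner_le (T : Finset (Fin n)) {v : EuclideanSpace ℝ (Fin d)} (hv : ‖v‖ = 1) :
    |∑ i ∈ T, ⟪v, x i - μ⟫| ≤ #T * ‖sampleMean x T - μ‖ := by
  rw [← card_mul_inner_sampleMean_sub, abs_mul, Nat.abs_cast]
  gcongr
  simpa [hv] using abs_real_inner_le_norm v (sampleMean x T - μ)

variable {S S' : Finset (Fin n)} {ε δ : ℝ}

lemma norm_sampleMean_sub_le (hsub : S' ⊆ S) (hcard : (1 - ε) * #S ≤ #S')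
    (hε0 : 0 ≤ ε) (hεδ : ε ≤ δ) (hε : ε ≤ 1 / 2)
    (hmean : ‖sampleMean x S - μ‖ ≤ δ)
    (hub : ∀ v : EuclideanSpace ℝ (Fin d), ‖v‖ = 1 → qForm x S μ v ≤ 1 + δ ^ 2 / ε)
    (hlb : ∀ v : EuclideanSpace ℝ (Fin d), ‖v‖ = 1 → 1 - δ ^ 2 / ε ≤ qForm x S' μ v) :
    ‖sampleMean x S' - μ‖ ≤ 6 * δ := by
  have hδ : 0 ≤ δ := hε0.trans hεδ
  rcases S'.eq_empty_or_nonempty with rfl | hS'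
  · obtain rfl : S = ∅ := by
      rw [← card_eq_zero, ← Nat.cast_eq_zero (R := ℝ)]
      simp only [card_empty, Nat.cast_zero] at hcard
      nlinarith [(#S).cast_nonneg (α := ℝ)]
    linarith
  have hm : (0 : ℝ) < #S' := by exact_mod_cast hS'.card_pos
  refine norm_le_of_forall_unit_inner_le (by positivity) fun v hv => ?_
  have hsum := abs_sum_subset_le (fun i => ⟪v, x i - μ⟫) hsub hε0 hεδ hcard
    ((abs_sum_inner_le x μ S hv).trans (by gcongr))
    (by rw [← card_mul_qForm]; exact mul_le_mul_of_nonneg_left (hub v hv) (Nat.cast_nonneg _))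
    (by rw [← card_mul_qForm]; exact mul_le_mul_of_nonneg_left (hlb v hv) hm.le)
  rw [← card_mul_inner_sampleMean_sub, abs_mul, Nat.abs_cast] at hsum
  have hN : (#S : ℝ) ≤ 2 * #S' := by nlinarith
  nlinarith [le_abs_self ⟪v, sampleMean x S' - μ⟫]

lemma card_mul_qForm_le_of_subset (hsub : S' ⊆ S) (v : EuclideanSpace ℝ (Fin d)) :
    #S' * qForm x S' μ v ≤ #S * qForm x S μ v := by
  simp only [card_mul_qForm]
  exact sum_le_sum_of_subset_of_nonneg hsub fun i _ _ => sq_nonneg _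

lemma qForm_le_of_subset (hsub : S' ⊆ S) (hcard : (1 - ε) * #S ≤ #S')
    (hε0 : 0 ≤ ε) (hεδ : ε ≤ δ) (hε : ε ≤ 1 / 2) {v : EuclideanSpace ℝ (Fin d)}
    (hub : qForm x S μ v ≤ 1 + δ ^ 2 / ε) :
    qForm x S' μ v ≤ 1 + 4 * (δ ^ 2 / ε) := by
  have hεt := le_sq_div_self hε0 hεδ
  rcases S'.eq_empty_or_nonempty with rfl | hS'
  · simp only [qForm, card_empty, Nat.cast_zero, inv_zero, zero_mul]
    linarith
  have hm : (0 : ℝ) < #S' := by exact_mod_cast hS'.card_pos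
  have hmass := (card_mul_qForm_le_of_subset x μ hsub v).trans
    (mul_le_mul_of_nonneg_left hub (Nat.cast_nonneg _))
  have ht : 0 ≤ δ ^ 2 / ε := by positivity
  have hN : (#S : ℝ) ≤ 2 * #S' := by nlinarith
  refine le_of_mul_le_mul_left (hmass.trans ?_) hm
  nlinarith [mul_le_mul_of_nonneg_right hcard (by positivity : 0 ≤ 1 + δ ^ 2 / ε),
    mul_le_mul_of_nonneg_left hN (by positivity : 0 ≤ ε * (1 + δ ^ 2 / ε)),
    mul_le_mul_of_nonneg_left hεt hm.le, mul_le_mul_of_nonneg_left hε (mul_nonneg hm.le ht)]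

end Moments

theorem stmt2 {d n : ℕ} (x : Fin n → EuclideanSpace ℝ (Fin d)) (S : Finset (Fin n))
    (μ : EuclideanSpace ℝ (Fin d)) (ε δ : ℝ)
    (hε0 : 0 ≤ ε) (hεδ : ε ≤ δ) (hε : ε ≤ 1/2)
    (hmean : ‖sampleMean x S - μ‖ ≤ δ)
    (hub : ∀ v : EuclideanSpace ℝ (Fin d), ‖v‖ = 1 → qForm x S μ v ≤ 1 + δ ^ 2 / ε)
    (hlb : ∀ S' ⊆ S, (1 - ε) * (S.card : ℝ) ≤ (S'.card : ℝ) →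
      ∀ v : EuclideanSpace ℝ (Fin d), ‖v‖ = 1 → 1 - δ ^ 2 / ε ≤ qForm x S' μ v) :
    IsStable x S μ 1 ε (7 * δ) := by
  intro S' hsub hcard
  have hδ : 0 ≤ δ := hε0.trans hεδ
  have ht : 0 ≤ δ ^ 2 / ε := by positivity
  refine ⟨?_, fun v hv => ?_⟩
  · have := norm_sampleMean_sub_le x μ hsub hcard hε0 hεδ hε hmean hub (hlb S' hsub hcard)
    linarith
  · have hlower := hlb S' hsub hcard v hv
    have hupper := qForm_le_of_subset x μ hsub hcard hε0 hεδ hε (hub v hv)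
    rw [one_pow, one_mul, abs_le, show (7 * δ) ^ 2 / ε = 49 * (δ ^ 2 / ε) by ring]
    constructor <;> linarith
end

section
/- Let X be a random vector in ℝ^d with mean 0 such that for all unit vectors v, (E|v^T X|^k)^{1/k} ≤ σ_k for some k ≥ 4. Then for every PSD matrix M with tr(M) = 1, E[(X^T M X)^{k/2}] ≤ σ_k^k. -/
/-!
Diagonalise `M = ∑ λᵢ vᵢ vᵢᵀ` with orthonormal `vᵢ`, `λᵢ ≥ 0` and `∑ λᵢ = tr M = 1`. Then
`Xᵀ M X = ∑ λᵢ (vᵢᵀ X)²` is a convex combination, so Jensen's inequality for the convex map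
`t ↦ t ^ (k / 2)` gives `(Xᵀ M X) ^ (k / 2) ≤ ∑ λᵢ |vᵢᵀ X| ^ k`. Taking expectations, each
`E |vᵢᵀ X| ^ k` is at most `σₖ ^ k` because `vᵢ` is a unit vector.
-/

open MeasureTheory Matrix

namespace Matrix.IsHermitian

variable {n : Type*} [Fintype n] [DecidableEq n] {M : Matrix n n ℝ} (hM : M.IsHermitian)

lemma sum_eigenvalues_eq_trace : ∑ i, hM.eigenvalues i = M.trace := by
  simpa using hM.trace_eq_sum_eigenvalues.symm

lemma sum_eigenvectorBasis_sq (i : n) : ∑ j, hM.eigenvectorBasis i j ^ 2 = 1 := by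
  have h := hM.eigenvectorBasis.orthonormal.1 i
  rw [EuclideanSpace.norm_eq, Real.sqrt_eq_one] at h
  simpa [sq_abs] using h

lemma dotProduct_mulVec_eq_sum_eigenvalues (x : n → ℝ) :
    x ⬝ᵥ M *ᵥ x = ∑ i, hM.eigenvalues i * (hM.eigenvectorBasis i ⬝ᵥ x) ^ 2 := by
  conv_lhs => rw [hM.spectral_theorem]
  rw [Unitary.conjStarAlgAut_apply, ← mulVec_mulVec, ← mulVec_mulVec, dotProduct_mulVec]
  have hU : ∀ i, (x ᵥ* hM.eigenvectorUnitary) i = hM.eigenvectorBasis i ⬝ᵥ x := by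
    intro i; simp [vecMul, dotProduct, mul_comm]
  have hU' : ∀ i,
      (star (hM.eigenvectorUnitary : Matrix n n ℝ) *ᵥ x) i = hM.eigenvectorBasis i ⬝ᵥ x := by
    intro i; simp [mulVec, dotProduct, star]
  refine Finset.sum_congr rfl fun i _ => ?_
  rw [mulVec_diagonal, hU, hU', Function.comp_apply, RCLike.ofReal_real_eq_id, id_eq]
  ring

end Matrix.IsHermitian

lemma Real.sq_rpow_natCast_div_two (t : ℝ) (k : ℕ) : (t ^ 2) ^ ((k : ℝ) / 2) = |t| ^ k := by
  rw [← sq_abs, ← Real.rpow_natCast |t| 2, ← Real.rpow_mul (abs_nonneg t), ← Real.rpow_natCast]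
  congr 1
  push_cast
  ring

namespace Matrix.PosSemidef

variable {n : Type*} [Fintype n] [DecidableEq n] {M : Matrix n n ℝ}

lemma rpow_dotProduct_mulVec_le (hM : M.PosSemidef) (htr : M.trace = 1) {k : ℕ} (hk : 2 ≤ k)
    (x : n → ℝ) :
    (x ⬝ᵥ M *ᵥ x) ^ ((k : ℝ) / 2) ≤
      ∑ i, hM.1.eigenvalues i * |hM.1.eigenvectorBasis i ⬝ᵥ x| ^ k := by
  have hp : 1 ≤ (k : ℝ) / 2 := by
    rw [le_div_iff₀ two_pos, one_mul]
    exact_mod_cast hk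
  rw [hM.1.dotProduct_mulVec_eq_sum_eigenvalues]
  simp only [← Real.sq_rpow_natCast_div_two]
  exact Real.rpow_arith_mean_le_arith_mean_rpow _ _ _ (fun i _ => hM.eigenvalues_nonneg i)
    (hM.1.sum_eigenvalues_eq_trace.trans htr) (fun i _ => sq_nonneg _) hp

lemma integral_rpow_dotProduct_mulVec_le {Ω : Type*} [MeasurableSpace Ω] {μ : Measure Ω}
    (hM : M.PosSemidef) (htr : M.trace = 1) {k : ℕ} (hk : 2 ≤ k) {X : Ω → n → ℝ} {B : ℝ}
    (hint : ∀ v : n → ℝ, Integrable (fun ω => |v ⬝ᵥ X ω| ^ k) μ)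
    (hB : ∀ v : n → ℝ, ∑ i, v i ^ 2 = 1 → ∫ ω, |v ⬝ᵥ X ω| ^ k ∂μ ≤ B) :
    ∫ ω, (X ω ⬝ᵥ M *ᵥ X ω) ^ ((k : ℝ) / 2) ∂μ ≤ B := by
  set lam := hM.1.eigenvalues
  set u := fun i => hM.1.eigenvectorBasis i
  have hint_sum : Integrable (fun ω => ∑ i, lam i * |u i ⬝ᵥ X ω| ^ k) μ :=
    integrable_finsetSum _ fun i _ => (hint (u i)).const_mul (lam i)
  calc ∫ ω, (X ω ⬝ᵥ M *ᵥ X ω) ^ ((k : ℝ) / 2) ∂μ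
      ≤ ∫ ω, ∑ i, lam i * |u i ⬝ᵥ X ω| ^ k ∂μ :=
        integral_mono_of_nonneg
          (.of_forall fun ω => Real.rpow_nonneg (hM.dotProduct_mulVec_nonneg _) _) hint_sum
          (.of_forall fun ω => hM.rpow_dotProduct_mulVec_le htr hk (X ω))
    _ = ∑ i, lam i * ∫ ω, |u i ⬝ᵥ X ω| ^ k ∂μ := by
        rw [integral_finsetSum _ fun i _ => (hint (u i)).const_mul (lam i)]
        simp only [integral_const_mul]
    _ ≤ ∑ i, lam i * B := Finset.sum_le_sum fun i _ => mul_le_mul_of_nonneg_left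
        (hB _ (hM.1.sum_eigenvectorBasis_sq i)) (hM.eigenvalues_nonneg i)
    _ = B := by rw [← Finset.sum_mul, hM.1.sum_eigenvalues_eq_trace, htr, one_mul]

end Matrix.PosSemidef

theorem stmt6_general {d : ℕ} {Ω : Type*} [MeasurableSpace Ω] (μ : Measure Ω)
    (X : Ω → (Fin d → ℝ))
    (k : ℕ) (hk : 4 ≤ k) (σk : ℝ)
    (hintk : ∀ v : Fin d → ℝ, Integrable (fun ω => |∑ i, v i * X ω i| ^ k) μ)
    (hmom : ∀ v : Fin d → ℝ, (∑ i, v i ^ 2) = 1 →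
      (∫ ω, |∑ i, v i * X ω i| ^ k ∂μ) ^ ((k : ℝ)⁻¹) ≤ σk)
    (M : Matrix (Fin d) (Fin d) ℝ) (hM : M.PosSemidef) (htr : M.trace = 1) :
    ∫ ω, (X ω ⬝ᵥ M.mulVec (X ω)) ^ ((k : ℝ) / 2) ∂μ ≤ σk ^ k := by
  refine hM.integral_rpow_dotProduct_mulVec_le htr (by omega) hintk fun v hv => ?_
  have hnonneg : 0 ≤ ∫ ω, |v ⬝ᵥ X ω| ^ k ∂μ := integral_nonneg fun ω => by positivity
  rw [← Real.rpow_inv_natCast_pow hnonneg (by omega : k ≠ 0)]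
  exact pow_le_pow_left₀ (Real.rpow_nonneg hnonneg _) (hmom v hv) k

theorem stmt6 {d : ℕ} {Ω : Type*} [MeasurableSpace Ω] (μ : Measure Ω)
    [IsProbabilityMeasure μ] (X : Ω → (Fin d → ℝ)) (hXm : Measurable X)
    (k : ℕ) (hk : 4 ≤ k) (σk : ℝ) (hσ : 0 ≤ σk)
    (hmean : ∀ i, ∫ ω, X ω i ∂μ = 0)
    (hintk : ∀ v : Fin d → ℝ, Integrable (fun ω => |∑ i, v i * X ω i| ^ k) μ)
    (hmom : ∀ v : Fin d → ℝ, (∑ i, v i ^ 2) = 1 →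
      (∫ ω, |∑ i, v i * X ω i| ^ k ∂μ) ^ ((k : ℝ)⁻¹) ≤ σk)
    (M : Matrix (Fin d) (Fin d) ℝ) (hM : M.PosSemidef) (htr : M.trace = 1) :
    ∫ ω, (X ω ⬝ᵥ M.mulVec (X ω)) ^ ((k : ℝ) / 2) ∂μ ≤ σk ^ k :=
  stmt6_general μ X k hk σk hintk hmom M hM htr
end

section
/- Let X be a random vector in ℝ^d with mean 0, covariance satisfying (1 − σ_k² ε^{1−2/k}) I ⪯ Σ ⪯ I, and (E|v^TX|^k)^{1/k} ≤ σ_k for all unit vectors v, k ≥ 4. Let f(x) = min(x, t) for t ≥ C T_k² where T_k = σ_k ε^{−1/k}. Then for every PSD matrix M with tr(M) = 1, |E[f(X^T M X)] − 1| ≤ σ_k² ε^{1−2/k} (1 + C^{1 − k/2}). -/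
/-!
Diagonalising `M` writes `Xᵀ M X = ∑ λᵢ ⟨uᵢ, X⟩²` as a convex combination of squared
one-dimensional marginals, so its mean lies in `[1 - δ, 1]` with `δ = σ_k² ε^(1 - 2/k)`.
Truncating at `t` loses at most `E[Q^(k/2)] / t^(k/2 - 1)`, because
`q - min q t ≤ q^m / t^(m - 1)`, and by Jensen `E[Q^(k/2)] ≤ ∑ λᵢ E|⟨uᵢ, X⟩|^k ≤ σ_k^k`.
The threshold `t ≥ C σ_k² ε^(-2/k)` turns `σ_k^k / t^(k/2 - 1)` into `δ C^(1 - k/2)`.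
-/

open MeasureTheory Matrix

theorem Matrix.PosSemidef.exists_eq_sum_mul_sq {n : Type*} [Fintype n] {M : Matrix n n ℝ}
    (hM : M.PosSemidef) :
    ∃ (w : n → ℝ) (u : n → n → ℝ), (∀ i, 0 ≤ w i) ∧ ∑ i, w i = M.trace ∧
      (∀ i, ∑ j, u i j ^ 2 = 1) ∧
      ∀ x : n → ℝ, x ⬝ᵥ M *ᵥ x = ∑ i, w i * (∑ j, u i j * x j) ^ 2 := by
  classical
  set U : Matrix n n ℝ := (hM.1.eigenvectorUnitary : Matrix n n ℝ) with hU
  have hUU : star U * U = 1 := Unitary.coe_star_mul_self _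
  refine ⟨hM.1.eigenvalues, fun i j => U j i, hM.eigenvalues_nonneg, ?_, fun i => ?_,
    fun x => ?_⟩
  · simpa using hM.1.trace_eq_sum_eigenvalues.symm
  · simpa [Matrix.mul_apply, sq] using congrFun (congrFun hUU i) i
  · have hstar : star U = Uᵀ := by ext; simp [Matrix.star_apply]
    conv_lhs => rw [hM.1.spectral_theorem, Unitary.conjStarAlgAut_apply, ← hU]
    rw [← mulVec_mulVec, ← mulVec_mulVec, dotProduct_mulVec, ← mulVec_transpose, ← hstar]
    simp only [mulVec_diagonal, dotProduct, Function.comp_apply, RCLike.ofReal_real_eq_id, id_eq]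
    refine Finset.sum_congr rfl fun i _ => ?_
    simp only [hstar, mulVec, dotProduct, transpose_apply]
    ring

theorem sub_min_le_rpow_div_rpow {q t m : ℝ} (hq : 0 ≤ q) (ht : 0 < t) (hm : 1 ≤ m) :
    q - min q t ≤ q ^ m / t ^ (m - 1) := by
  rcases le_total q t with hqt | htq
  · rw [min_eq_left hqt, sub_self]
    positivity
  · have hq_pos : 0 < q := ht.trans_le htq
    calc q - min q t ≤ q := by rw [min_eq_right htq]; linarith
      _ = q ^ m / q ^ (m - 1) := by rw [← Real.rpow_sub hq_pos]; norm_num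
      _ ≤ q ^ m / t ^ (m - 1) := by gcongr

theorem rpow_sum_mul_sq_le_sum_mul_abs_pow {ι : Type*} (s : Finset ι) {w y : ι → ℝ}
    (hw : ∀ i ∈ s, 0 ≤ w i) (hw1 : ∑ i ∈ s, w i = 1) {k : ℕ} (hk : 2 ≤ k) :
    (∑ i ∈ s, w i * y i ^ 2) ^ ((k : ℝ) / 2) ≤ ∑ i ∈ s, w i * |y i| ^ k := by
  have hpow (i : ι) : (y i ^ 2) ^ ((k : ℝ) / 2) = |y i| ^ k := by
    rw [← sq_abs, ← Real.rpow_natCast, ← Real.rpow_natCast, ← Real.rpow_mul (abs_nonneg _)]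
    congr 1
    push_cast
    ring
  have hk' : (1 : ℝ) ≤ k / 2 := by
    rw [le_div_iff₀ two_pos]; exact_mod_cast (by omega : 1 * 2 ≤ k)
  simpa only [hpow] using Real.rpow_arith_mean_le_arith_mean_rpow s w (fun i => y i ^ 2) hw hw1
    (fun i _ => sq_nonneg _) hk'

theorem rpow_div_rpow_le_of_mul_sq_le {σ ε C t k : ℝ} (hσ : 0 < σ) (hε : 0 < ε) (hC : 0 < C)
    (hk : 2 ≤ k) (ht : C * (σ * ε ^ (-k⁻¹)) ^ 2 ≤ t) :
    σ ^ k / t ^ (k / 2 - 1) ≤ σ ^ 2 * ε ^ (1 - 2 / k) * C ^ (1 - k / 2) := by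
  set t₀ := C * (σ * ε ^ (-k⁻¹)) ^ 2
  have ht₀ : 0 < t₀ := by positivity
  have hσk : σ ^ 2 * ε ^ (1 - 2 / k) * C ^ (1 - k / 2) * t₀ ^ (k / 2 - 1) = σ ^ k := by
    apply Real.log_injOn_pos (Set.mem_Ioi.2 (mul_pos (by positivity) (Real.rpow_pos_of_pos ht₀ _)))
      (Set.mem_Ioi.2 (by positivity))
    rw [Real.log_rpow hσ, Real.log_mul (by positivity) (by positivity),
      Real.log_mul (by positivity) (by positivity),
      Real.log_mul (by positivity) (by positivity), Real.log_pow,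
      Real.log_rpow hε, Real.log_rpow hC, Real.log_rpow ht₀,
      Real.log_mul hC.ne' (by positivity), Real.log_pow,
      Real.log_mul hσ.ne' (by positivity), Real.log_rpow hε]
    field_simp
    ring
  rw [div_le_iff₀ (Real.rpow_pos_of_pos (ht₀.trans_le ht) _), ← hσk]
  gcongr
  linarith

section Truncation

variable {Ω : Type*} [MeasurableSpace Ω] {μ : Measure Ω}

theorem integrable_min_const_of_nonneg {Q : Ω → ℝ} {t : ℝ} (hQ0 : ∀ ω, 0 ≤ Q ω)
    (hQ : Integrable Q μ) (ht : 0 ≤ t) : Integrable (fun ω => min (Q ω) t) μ :=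
  hQ.mono (hQ.aestronglyMeasurable.inf aestronglyMeasurable_const) (ae_of_all _ fun ω => by
    simp [abs_of_nonneg (hQ0 ω), abs_of_nonneg (le_min (hQ0 ω) ht)])

theorem integral_sub_integral_min_le {Q B : Ω → ℝ} {t m : ℝ} (hQ0 : ∀ ω, 0 ≤ Q ω)
    (hQ : Integrable Q μ) (hB : Integrable B μ) (hQB : ∀ ω, Q ω ^ m ≤ B ω) (ht : 0 < t)
    (hm : 1 ≤ m) :
    ∫ ω, Q ω ∂μ - ∫ ω, min (Q ω) t ∂μ ≤ (∫ ω, B ω ∂μ) / t ^ (m - 1) := by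
  have hmin := integrable_min_const_of_nonneg hQ0 hQ ht.le
  rw [← integral_sub hQ hmin, ← integral_div]
  exact integral_mono (hQ.sub hmin) (hB.div_const _) fun ω =>
    (sub_min_le_rpow_div_rpow (hQ0 ω) ht hm).trans (by gcongr; exact hQB ω)

theorem integral_sq_eq_zero_of_integral_abs_pow_le_zero {Y : Ω → ℝ} {k : ℕ} (hk : k ≠ 0)
    (hint : Integrable (fun ω => |Y ω| ^ k) μ) (h : ∫ ω, |Y ω| ^ k ∂μ ≤ 0) :
    ∫ ω, Y ω ^ 2 ∂μ = 0 := by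
  have hzero : (fun ω => |Y ω| ^ k) =ᵐ[μ] 0 :=
    (integral_eq_zero_iff_of_nonneg (fun ω => by positivity) hint).1
      (le_antisymm h (integral_nonneg fun ω => by positivity))
  refine integral_eq_zero_of_ae ?_
  filter_upwards [hzero] with ω hω
  simp_all

variable [IsProbabilityMeasure μ]

theorem abs_integral_min_sum_mul_sq_sub_one_le {ι : Type*} [Fintype ι] {w : ι → ℝ}
    {Y : ι → Ω → ℝ} {k : ℕ} {δ B t : ℝ} (hw0 : ∀ i, 0 ≤ w i) (hw1 : ∑ i, w i = 1)
    (hY : ∀ i, AEStronglyMeasurable (Y i) μ) (hk : 2 ≤ k)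
    (hint : ∀ i, Integrable (fun ω => |Y i ω| ^ k) μ) (hmom : ∀ i, ∫ ω, |Y i ω| ^ k ∂μ ≤ B)
    (hlo : ∀ i, 1 - δ ≤ ∫ ω, Y i ω ^ 2 ∂μ) (hhi : ∀ i, ∫ ω, Y i ω ^ 2 ∂μ ≤ 1) (ht : 0 < t) :
    |∫ ω, min (∑ i, w i * Y i ω ^ 2) t ∂μ - 1| ≤ δ + B / t ^ ((k : ℝ) / 2 - 1) := by
  have hsq (i : ι) : Integrable (fun ω => Y i ω ^ 2) μ := by
    simpa using integrable_norm_pow_of_le (hY i) hk (by simpa using hint i)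
  have hQ : Integrable (fun ω => ∑ i, w i * Y i ω ^ 2) μ :=
    integrable_finsetSum _ fun i _ => (hsq i).const_mul _
  have hpow : Integrable (fun ω => ∑ i, w i * |Y i ω| ^ k) μ :=
    integrable_finsetSum _ fun i _ => (hint i).const_mul _
  have hEQ : ∫ ω, ∑ i, w i * Y i ω ^ 2 ∂μ = ∑ i, w i * ∫ ω, Y i ω ^ 2 ∂μ := by
    rw [integral_finsetSum _ fun i _ => (hsq i).const_mul _]
    simp only [integral_const_mul]
  have hEQ_lo : 1 - δ ≤ ∫ ω, ∑ i, w i * Y i ω ^ 2 ∂μ := by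
    rw [hEQ]
    calc 1 - δ = ∑ i, w i * (1 - δ) := by rw [← Finset.sum_mul, hw1, one_mul]
      _ ≤ _ := Finset.sum_le_sum fun i _ => mul_le_mul_of_nonneg_left (hlo i) (hw0 i)
  have hEQ_hi : ∫ ω, ∑ i, w i * Y i ω ^ 2 ∂μ ≤ 1 := by
    rw [hEQ]
    calc _ ≤ ∑ i, w i * 1 :=
          Finset.sum_le_sum fun i _ => mul_le_mul_of_nonneg_left (hhi i) (hw0 i)
      _ = 1 := by rw [← Finset.sum_mul, hw1, one_mul]
  have hEpow : ∫ ω, ∑ i, w i * |Y i ω| ^ k ∂μ ≤ B := by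
    rw [integral_finsetSum _ fun i _ => (hint i).const_mul _]
    calc _ ≤ ∑ i, w i * B := Finset.sum_le_sum fun i _ => by
          rw [integral_const_mul]; exact mul_le_mul_of_nonneg_left (hmom i) (hw0 i)
      _ = B := by rw [← Finset.sum_mul, hw1, one_mul]
  have hQ0 (ω : Ω) : 0 ≤ ∑ i, w i * Y i ω ^ 2 :=
    Finset.sum_nonneg fun i _ => mul_nonneg (hw0 i) (sq_nonneg _)
  have htrunc := integral_sub_integral_min_le hQ0 hQ hpow
    (fun ω => rpow_sum_mul_sq_le_sum_mul_abs_pow _ (fun i _ => hw0 i) hw1 hk) ht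
    (by rw [le_div_iff₀ two_pos]; exact_mod_cast (by omega : 1 * 2 ≤ k))
  have hmin_le : ∫ ω, min (∑ i, w i * Y i ω ^ 2) t ∂μ ≤ ∫ ω, ∑ i, w i * Y i ω ^ 2 ∂μ :=
    integral_mono (integrable_min_const_of_nonneg hQ0 hQ ht.le) hQ fun ω => min_le_left _ _
  have htail : (∫ ω, ∑ i, w i * |Y i ω| ^ k ∂μ) / t ^ ((k : ℝ) / 2 - 1) ≤
      B / t ^ ((k : ℝ) / 2 - 1) :=
    div_le_div_of_nonneg_right hEpow (by positivity)
  rw [abs_le]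
  constructor <;> linarith

end Truncation

theorem stmt8_general {d : ℕ} {Ω : Type*} [MeasurableSpace Ω] (μ : Measure Ω)
    [IsProbabilityMeasure μ] (X : Ω → (Fin d → ℝ)) (hXm : Measurable X)
    (k : ℕ) (hk : 4 ≤ k) (σk ε C t : ℝ) (hσ : 0 ≤ σk)
    (hε0 : 0 < ε) (hC : 0 < C)
    (ht : C * (σk * ε ^ (-(k : ℝ)⁻¹)) ^ 2 ≤ t)
    (hcovUB : ∀ v : Fin d → ℝ, (∑ i, v i ^ 2) = 1 →
      ∫ ω, (∑ i, v i * X ω i) ^ 2 ∂μ ≤ 1)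
    (hcovLB : ∀ v : Fin d → ℝ, (∑ i, v i ^ 2) = 1 →
      1 - σk ^ 2 * ε ^ (1 - 2 / (k : ℝ)) ≤ ∫ ω, (∑ i, v i * X ω i) ^ 2 ∂μ)
    (hintk : ∀ v : Fin d → ℝ, Integrable (fun ω => |∑ i, v i * X ω i| ^ k) μ)
    (hmom : ∀ v : Fin d → ℝ, (∑ i, v i ^ 2) = 1 →
      (∫ ω, |∑ i, v i * X ω i| ^ k ∂μ) ^ ((k : ℝ)⁻¹) ≤ σk)
    (M : Matrix (Fin d) (Fin d) ℝ) (hM : M.PosSemidef) (htr : M.trace = 1) :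
    |(∫ ω, min (X ω ⬝ᵥ M.mulVec (X ω)) t ∂μ) - 1| ≤
      σk ^ 2 * ε ^ (1 - 2 / (k : ℝ)) * (1 + C ^ (1 - (k : ℝ) / 2)) := by
  obtain ⟨w, u, hw0, hw1, hu, hquad⟩ := hM.exists_eq_sum_mul_sq
  rw [htr] at hw1
  have hmomk (v : Fin d → ℝ) (hv : ∑ i, v i ^ 2 = 1) :
      ∫ ω, |∑ i, v i * X ω i| ^ k ∂μ ≤ σk ^ (k : ℝ) :=
    (Real.rpow_inv_le_iff_of_pos (integral_nonneg fun _ => by positivity) hσ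
      (by positivity)).1 (hmom v hv)
  -- `σk = 0` would make a unit marginal vanish a.s., against the covariance lower bound.
  have hσ_pos : 0 < σk := by
    obtain ⟨i, -⟩ := Finset.nonempty_of_sum_ne_zero (hw1.trans_ne one_ne_zero)
    refine hσ.lt_of_ne fun hσ0 => ?_
    have hvar := hcovLB (u i) (hu i)
    rw [integral_sq_eq_zero_of_integral_abs_pow_le_zero (by omega) (hintk (u i))
      (by simpa [← hσ0, show k ≠ 0 by omega] using hmomk (u i) (hu i)), ← hσ0] at hvar
    norm_num at hvar
  simp only [hquad]
  refine (abs_integral_min_sum_mul_sq_sub_one_le hw0 hw1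
    (fun i => (by fun_prop : Measurable _).aestronglyMeasurable) (by omega)
    (fun i => hintk (u i)) (fun i => hmomk _ (hu i)) (fun i => hcovLB _ (hu i))
    (fun i => hcovUB _ (hu i)) ((by positivity : (0 : ℝ) < _).trans_le ht)).trans ?_
  rw [mul_add, mul_one]
  gcongr
  exact rpow_div_rpow_le_of_mul_sq_le hσ_pos hε0 hC (by norm_cast; omega) ht

theorem stmt8 {d : ℕ} {Ω : Type*} [MeasurableSpace Ω] (μ : Measure Ω)
    [IsProbabilityMeasure μ] (X : Ω → (Fin d → ℝ)) (hXm : Measurable X)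
    (k : ℕ) (hk : 4 ≤ k) (σk ε C t : ℝ) (hσ : 0 ≤ σk)
    (hε0 : 0 < ε) (hε1 : ε < 1) (hC : 0 < C)
    (ht : C * (σk * ε ^ (-(k : ℝ)⁻¹)) ^ 2 ≤ t)
    (hmean : ∀ i, ∫ ω, X ω i ∂μ = 0)
    (hL2 : Integrable (fun ω => ∑ i, X ω i ^ 2) μ)
    (hcovUB : ∀ v : Fin d → ℝ, (∑ i, v i ^ 2) = 1 →
      ∫ ω, (∑ i, v i * X ω i) ^ 2 ∂μ ≤ 1)
    (hcovLB : ∀ v : Fin d → ℝ, (∑ i, v i ^ 2) = 1 →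
      1 - σk ^ 2 * ε ^ (1 - 2 / (k : ℝ)) ≤ ∫ ω, (∑ i, v i * X ω i) ^ 2 ∂μ)
    (hintk : ∀ v : Fin d → ℝ, Integrable (fun ω => |∑ i, v i * X ω i| ^ k) μ)
    (hmom : ∀ v : Fin d → ℝ, (∑ i, v i ^ 2) = 1 →
      (∫ ω, |∑ i, v i * X ω i| ^ k ∂μ) ^ ((k : ℝ)⁻¹) ≤ σk)
    (M : Matrix (Fin d) (Fin d) ℝ) (hM : M.PosSemidef) (htr : M.trace = 1) :
    |(∫ ω, min (X ω ⬝ᵥ M.mulVec (X ω)) t ∂μ) - 1| ≤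
      σk ^ 2 * ε ^ (1 - 2 / (k : ℝ)) * (1 + C ^ (1 - (k : ℝ) / 2)) :=
  stmt8_general μ X hXm k hk σk ε C t hσ hε0 hC ht hcovUB hcovLB hintk hmom M hM htr
end

section
/- Let X be a random vector in ℝ^d with mean μ, covariance I, and (E|v^T(X−μ)|^k)^{1/k} ≤ σ_k for all unit vectors v, k > 2. Let ε ≤ 1/2 and E = {‖X − μ‖ ≤ T} with P(E) ≥ 1 − ε. Let Z be X conditioned on E. Then ‖μ − E[Z]‖ ≤ σ_k ε^{1−1/k}/(1−ε) ≤ 2 σ_k ε^{1−1/k}. -/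
open MeasureTheory ProbabilityTheory

/-! Since `X` has mean `m`, the shift of the mean caused by conditioning on `E` is
`m - E[Z] = P(E)⁻¹ • ∫_{Eᶜ} (X - m)`. Pairing this vector with a unit direction `v` and applying
Hölder's inequality with exponents `k` and `k / (k - 1)` on `Eᶜ` bounds its norm by
`σ_k P(Eᶜ)^(1 - 1/k) ≤ σ_k ε^(1 - 1/k)`, and `P(E) ≥ 1 - ε ≥ 1/2`. -/

section

variable {Ω : Type*} [MeasurableSpace Ω] {μ : Measure Ω}

lemma setIntegral_abs_le_integral_rpow_mul_measureReal [IsFiniteMeasure μ] {p : ℝ} (hp : 1 < p)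
    {g : Ω → ℝ} (hg : AEStronglyMeasurable g μ) (hgp : Integrable (fun ω => |g ω| ^ p) μ)
    (s : Set Ω) :
    ∫ ω in s, |g ω| ∂μ ≤ (∫ ω, |g ω| ^ p ∂μ) ^ p⁻¹ * μ.real s ^ (1 - p⁻¹) := by
  have hp0 : 0 < p := one_pos.trans hp
  have hpq := Real.HolderConjugate.conjExponent hp
  have hmem : MemLp (fun ω => |g ω|) (ENNReal.ofReal p) μ := by
    refine (integrable_norm_rpow_iff hg.norm ?_ ENNReal.ofReal_ne_top).1 ?_
    · simpa using hp0
    · simpa [ENNReal.toReal_ofReal hp0.le] using hgp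
  have holder := integral_mul_le_Lp_mul_Lq_of_nonneg (μ := μ.restrict s) hpq
    (.of_forall fun ω => abs_nonneg (g ω)) (.of_forall fun _ => zero_le_one)
    (hmem.restrict s) (memLp_const 1)
  have hconj : 1 / p.conjExponent = 1 - p⁻¹ := by
    rw [Real.conjExponent]; field_simp
  simp only [mul_one, Real.one_rpow, integral_const, smul_eq_mul, measureReal_restrict_apply_univ,
    one_div, hconj] at holder
  refine holder.trans (mul_le_mul_of_nonneg_right ?_ (by positivity))
  exact Real.rpow_le_rpow (integral_nonneg fun ω => by positivity)
    (setIntegral_le_integral hgp (.of_forall fun ω => by positivity)) (by positivity)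

variable {E : Type*} [NormedAddCommGroup E] [InnerProductSpace ℝ E] [CompleteSpace E]

lemma norm_integral_le_of_forall_inner_le {f : Ω → E} (hf : Integrable f μ) {C : ℝ} (hC : 0 ≤ C)
    (h : ∀ v : E, ‖v‖ = 1 → ∫ ω, inner ℝ v (f ω) ∂μ ≤ C) : ‖∫ ω, f ω ∂μ‖ ≤ C := by
  set J := ∫ ω, f ω ∂μ
  rcases eq_or_ne J 0 with hJ | hJ
  · simpa [hJ] using hC
  have hJ' : ‖J‖ ≠ 0 := norm_ne_zero_iff.2 hJ
  have hdir := h (‖J‖⁻¹ • J) (norm_smul_inv_norm hJ)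
  rw [integral_inner hf, real_inner_smul_left, real_inner_self_eq_norm_sq] at hdir
  calc ‖J‖ = ‖J‖⁻¹ * ‖J‖ ^ 2 := by field_simp
    _ ≤ C := hdir

lemma norm_setIntegral_sub_le_of_moment_le [IsFiniteMeasure μ] {X : Ω → E} (hX : Integrable X μ)
    (m : E) {p σ ε : ℝ} (hp : 1 < p) (hσ : 0 ≤ σ)
    (hint : ∀ v : E, Integrable (fun ω => |inner ℝ v (X ω - m)| ^ p) μ)
    (hmom : ∀ v : E, ‖v‖ = 1 → (∫ ω, |inner ℝ v (X ω - m)| ^ p ∂μ) ^ p⁻¹ ≤ σ)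
    {s : Set Ω} (hs : μ.real s ≤ ε) :
    ‖∫ ω in s, (X ω - m) ∂μ‖ ≤ σ * ε ^ (1 - p⁻¹) := by
  have hXm : Integrable (fun ω => X ω - m) μ := hX.sub (integrable_const m)
  have hexp : 0 ≤ 1 - p⁻¹ := sub_nonneg.2 (inv_le_one_of_one_le₀ hp.le)
  have hε : 0 ≤ ε := measureReal_nonneg.trans hs
  refine norm_integral_le_of_forall_inner_le hXm.restrict
    (mul_nonneg hσ (Real.rpow_nonneg hε _)) fun v hv => ?_
  have hg : AEStronglyMeasurable (fun ω => inner ℝ v (X ω - m)) μ :=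
    aestronglyMeasurable_const.inner hXm.aestronglyMeasurable
  calc ∫ ω in s, inner ℝ v (X ω - m) ∂μ
      ≤ ∫ ω in s, |inner ℝ v (X ω - m)| ∂μ :=
        integral_mono (hXm.const_inner v).restrict (hXm.const_inner v).restrict.abs
          fun ω => le_abs_self _
    _ ≤ (∫ ω, |inner ℝ v (X ω - m)| ^ p ∂μ) ^ p⁻¹ * μ.real s ^ (1 - p⁻¹) :=
        setIntegral_abs_le_integral_rpow_mul_measureReal hp hg (hint v) s
    _ ≤ σ * ε ^ (1 - p⁻¹) :=
        mul_le_mul (hmom v hv) (Real.rpow_le_rpow measureReal_nonneg hs hexp) (by positivity) hσ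

lemma sub_integral_cond_eq_smul_setIntegral_compl [IsProbabilityMeasure μ] {X : Ω → E}
    (hX : Integrable X μ) {m : E} (hm : ∫ ω, X ω ∂μ = m) {s : Set Ω} (hs : MeasurableSet s)
    (hμs : μ.real s ≠ 0) :
    m - ∫ ω, X ω ∂μ[|s] = (μ.real s)⁻¹ • ∫ ω in sᶜ, (X ω - m) ∂μ := by
  have hcond : ∫ ω, X ω ∂μ[|s] = (μ.real s)⁻¹ • ∫ ω in s, X ω ∂μ := by
    rw [ProbabilityTheory.cond, integral_smul_measure, ENNReal.toReal_inv, measureReal_def]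
  have hcompl : ∫ ω in sᶜ, (X ω - m) ∂μ = μ.real s • m - ∫ ω in s, X ω ∂μ := by
    rw [integral_sub hX.restrict (integrable_const m).restrict, setIntegral_const,
      probReal_compl_eq_one_sub hs, eq_sub_of_add_eq' (integral_add_compl hs hX), hm, sub_smul,
      one_smul]
    abel
  rw [hcond, hcompl, smul_sub, smul_smul, inv_mul_cancel₀ hμs, one_smul]

end

theorem stmt10_general {d : ℕ} {Ω : Type*} [MeasurableSpace Ω] (μ : Measure Ω)
    [IsProbabilityMeasure μ] (X : Ω → EuclideanSpace ℝ (Fin d)) (hXm : Measurable X)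
    (m : EuclideanSpace ℝ (Fin d)) (k : ℕ) (hk : 2 < k) (σk ε T : ℝ)
    (hσ : 0 ≤ σk) (hε0 : 0 < ε) (hε : ε ≤ 1/2)
    (hXint : Integrable X μ) (hmean : ∫ ω, X ω ∂μ = m)
    (hintk : ∀ v : EuclideanSpace ℝ (Fin d),
      Integrable (fun ω => |(inner ℝ v (X ω - m) : ℝ)| ^ k) μ)
    (hmom : ∀ v : EuclideanSpace ℝ (Fin d), ‖v‖ = 1 →
      (∫ ω, |(inner ℝ v (X ω - m) : ℝ)| ^ k ∂μ) ^ ((k : ℝ)⁻¹) ≤ σk)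
    (hE : ENNReal.ofReal (1 - ε) ≤ μ {ω | ‖X ω - m‖ ≤ T}) :
    ‖m - ∫ ω, X ω ∂(ProbabilityTheory.cond μ {ω | ‖X ω - m‖ ≤ T})‖ ≤
      σk * ε ^ (1 - (k : ℝ)⁻¹) / (1 - ε) ∧
    σk * ε ^ (1 - (k : ℝ)⁻¹) / (1 - ε) ≤ 2 * σk * ε ^ (1 - (k : ℝ)⁻¹) := by
  set s := {ω | ‖X ω - m‖ ≤ T}
  have hs : MeasurableSet s := measurableSet_le (hXm.sub measurable_const).norm measurable_const
  have hμs : 1 - ε ≤ μ.real s := (ENNReal.ofReal_le_iff_le_toReal (measure_ne_top μ s)).1 hE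
  have h1ε : 0 < 1 - ε := by linarith
  have hpos : 0 < μ.real s := h1ε.trans_le hμs
  have htail : ‖∫ ω in sᶜ, (X ω - m) ∂μ‖ ≤ σk * ε ^ (1 - (k : ℝ)⁻¹) := by
    refine norm_setIntegral_sub_le_of_moment_le hXint m (by exact_mod_cast hk.trans' one_lt_two)
      hσ (fun v => by simpa only [Real.rpow_natCast] using hintk v)
      (fun v hv => by simpa only [Real.rpow_natCast] using hmom v hv) ?_
    rw [probReal_compl_eq_one_sub hs]
    linarith
  have hbound_nonneg := mul_nonneg hσ (Real.rpow_nonneg hε0.le (1 - (k : ℝ)⁻¹))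
  constructor
  · rw [sub_integral_cond_eq_smul_setIntegral_compl hXint hmean hs hpos.ne', norm_smul,
      Real.norm_of_nonneg (inv_nonneg.2 hpos.le), div_eq_inv_mul]
    exact mul_le_mul (inv_anti₀ h1ε hμs) htail (norm_nonneg _) (inv_pos.2 h1ε).le
  · rw [div_le_iff₀ h1ε]
    nlinarith

theorem stmt10 {d : ℕ} {Ω : Type*} [MeasurableSpace Ω] (μ : Measure Ω)
    [IsProbabilityMeasure μ] (X : Ω → EuclideanSpace ℝ (Fin d)) (hXm : Measurable X)
    (m : EuclideanSpace ℝ (Fin d)) (k : ℕ) (hk : 2 < k) (σk ε T : ℝ)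
    (hσ : 0 ≤ σk) (hε0 : 0 < ε) (hε : ε ≤ 1/2)
    (hXint : Integrable X μ) (hmean : ∫ ω, X ω ∂μ = m)
    (hcov : ∀ v : EuclideanSpace ℝ (Fin d), ‖v‖ = 1 →
      ∫ ω, (inner ℝ v (X ω - m) : ℝ) ^ 2 ∂μ = 1)
    (hintk : ∀ v : EuclideanSpace ℝ (Fin d),
      Integrable (fun ω => |(inner ℝ v (X ω - m) : ℝ)| ^ k) μ)
    (hmom : ∀ v : EuclideanSpace ℝ (Fin d), ‖v‖ = 1 →
      (∫ ω, |(inner ℝ v (X ω - m) : ℝ)| ^ k ∂μ) ^ ((k : ℝ)⁻¹) ≤ σk)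
    (hE : ENNReal.ofReal (1 - ε) ≤ μ {ω | ‖X ω - m‖ ≤ T}) :
    ‖m - ∫ ω, X ω ∂(ProbabilityTheory.cond μ {ω | ‖X ω - m‖ ≤ T})‖ ≤
      σk * ε ^ (1 - (k : ℝ)⁻¹) / (1 - ε) ∧
    σk * ε ^ (1 - (k : ℝ)⁻¹) / (1 - ε) ≤ 2 * σk * ε ^ (1 - (k : ℝ)⁻¹) :=
  stmt10_general μ X hXm m k hk σk ε T hσ hε0 hε hXint hmean hintk hmom hE
end

section
/- Let x_1,…,x_n ∈ ℝ^d with mean reference point μ = 0, and let ε ≤ 1/3, ε ≤ δ. Suppose w ∈ Δ_{n,ε} satisfies ‖∑_i w_i x_i‖ ≤ δ and ‖∑_i w_i x_i x_i^T − I‖ ≤ δ²/ε. Then there exists a subset S_1 ⊆ [n] with |S_1| ≥ (1 − 2ε)n such that ‖(1/|S_1|)∑_{i∈S_1} x_i‖ ≤ 10δ + 10√ε and (1/|S_1|)∑_{i∈S_1}(v^T x_i)² ≤ 9(1 + δ²/ε) for all unit vectors v. -/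
/-!
Keep the indices whose weight is at least half the uniform weight `1/(2n)`. Since every weight
is at most `1/((1-ε)n)`, the remaining indices carry mass at most `ε`, so at least `(1-2ε)n`
indices are kept. On the kept set `S₁` we have `1 ≤ 2n wᵢ`, which bounds the second moments of
the uniform distribution `u` on `S₁` by those of `w`. For the mean, Cauchy–Schwarz gives
`(∑ (uᵢ - wᵢ) ⟪v, xᵢ⟫)² ≤ χ²(u ‖ w) · ∑ wᵢ ⟪v, xᵢ⟫²` in every unit direction `v`, and splitting
the sum defining `χ²(u ‖ w)` over `S₁` and its complement bounds it by `21ε`.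
-/

open Finset

/-- `c i ^ 2 / w i` is `0` where `w i = 0`, hence the support condition `hc`. -/
theorem sq_sum_mul_le_sum_sq_div_mul_sum_mul_sq {ι : Type*} (s : Finset ι) (c w a : ι → ℝ)
    (hw : ∀ i ∈ s, 0 ≤ w i) (hc : ∀ i ∈ s, w i = 0 → c i = 0) :
    (∑ i ∈ s, c i * a i) ^ 2 ≤ (∑ i ∈ s, c i ^ 2 / w i) * ∑ i ∈ s, w i * a i ^ 2 := by
  refine sum_sq_le_sum_mul_sum_of_sq_le_mul s (fun i hi => div_nonneg (sq_nonneg _) (hw i hi))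
    (fun i hi => mul_nonneg (hw i hi) (sq_nonneg _)) fun i hi => le_of_eq ?_
  rcases eq_or_ne (w i) 0 with h | h
  · simp [hc i hi h]
  · field_simp

theorem norm_le_of_forall_inner_le {E : Type*} [NormedAddCommGroup E] [InnerProductSpace ℝ E]
    {y : E} {C : ℝ} (hC : 0 ≤ C) (h : ∀ v : E, ‖v‖ = 1 → inner ℝ v y ≤ C) : ‖y‖ ≤ C := by
  rcases eq_or_ne y 0 with rfl | hy
  · simpa using hC
  · have hy' : ‖y‖ ≠ 0 := norm_ne_zero_iff.mpr hy
    calc ‖y‖ = inner ℝ (‖y‖⁻¹ • y) y := by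
          rw [real_inner_smul_left, real_inner_self_eq_norm_sq, sq, inv_mul_cancel_left₀ hy']
      _ ≤ C := h _ (norm_smul_inv_norm hy)

theorem add_sqrt_twentyOne_le {ε δ : ℝ} (hε : 0 < ε) (hδ : 0 ≤ δ) :
    δ + √(21 * ε * (1 + δ ^ 2 / ε)) ≤ 10 * δ + 10 * √ε := by
  have hsq : √(21 * ε * (1 + δ ^ 2 / ε)) ≤ 5 * (√ε + δ) := by
    rw [Real.sqrt_le_left (by positivity)]
    have : ε * (1 + δ ^ 2 / ε) = ε + δ ^ 2 := by field_simp
    nlinarith [Real.sq_sqrt hε.le, Real.sqrt_nonneg ε]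
  nlinarith [Real.sqrt_nonneg ε]

noncomputable section

variable {ι : Type*} [Fintype ι] {ε : ℝ} {w : ι → ℝ}

/-- `w ∈ Δ_{n,ε}`, with `n = Fintype.card ι`. -/
structure IsCappedWeight (ε : ℝ) (w : ι → ℝ) : Prop where
  nonneg : ∀ i, 0 ≤ w i
  le_cap : ∀ i, w i ≤ 1 / ((1 - ε) * Fintype.card ι)
  sum_eq_one : ∑ i, w i = 1

def heavySet (w : ι → ℝ) : Finset ι := univ.filter fun i => 1 / (2 * Fintype.card ι) ≤ w i

def uniformWeight [DecidableEq ι] (S : Finset ι) (i : ι) : ℝ := if i ∈ S then (#S : ℝ)⁻¹ else 0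

theorem mem_heavySet {i : ι} : i ∈ heavySet w ↔ 1 / (2 * Fintype.card ι) ≤ w i := by
  simp [heavySet]

theorem sum_uniformWeight_mul [DecidableEq ι] (S : Finset ι) (a : ι → ℝ) :
    ∑ i, uniformWeight S i * a i = (#S : ℝ)⁻¹ * ∑ i ∈ S, a i := by
  simp [uniformWeight, ite_mul, sum_ite_mem, mul_sum]

theorem sum_compl_heavySet_le [DecidableEq ι] :
    ∑ i ∈ (heavySet w)ᶜ, w i ≤ (Fintype.card ι - #(heavySet w)) / (2 * Fintype.card ι) := by
  have hle : ∀ i ∈ (heavySet w)ᶜ, w i ≤ 1 / (2 * Fintype.card ι) := fun i hi =>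
    (not_le.mp (mt mem_heavySet.mpr (mem_compl.mp hi))).le
  calc ∑ i ∈ (heavySet w)ᶜ, w i ≤ #(heavySet w)ᶜ • (1 / (2 * Fintype.card ι)) :=
        sum_le_card_nsmul _ _ _ hle
    _ = _ := by
      rw [card_compl, nsmul_eq_mul, Nat.cast_sub (card_le_univ _)]
      ring

namespace IsCappedWeight

theorem card_pos (hw : IsCappedWeight ε w) : 0 < (Fintype.card ι : ℝ) := by
  obtain ⟨i, -, -⟩ := exists_ne_zero_of_sum_ne_zero (hw.sum_eq_one.symm ▸ one_ne_zero)
  exact_mod_cast Fintype.card_pos_iff.mpr ⟨i⟩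

theorem le_one_add_div (hw : IsCappedWeight ε w) (hε0 : 0 ≤ ε) (hε : ε ≤ 1 / 3) (i : ι) :
    w i ≤ (1 + 3 / 2 * ε) / Fintype.card ι := by
  have hN := hw.card_pos
  refine (hw.le_cap i).trans ?_
  rw [div_le_div_iff₀ (by nlinarith) hN]
  nlinarith [mul_nonneg (mul_nonneg hN.le hε0) (sub_nonneg.mpr hε)]

theorem card_heavySet_ge (hw : IsCappedWeight ε w) (hε0 : 0 ≤ ε) (hε1 : ε < 1) :
    (1 - 2 * ε) * Fintype.card ι ≤ #(heavySet w) := by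
  classical
  have hN := hw.card_pos
  have hout := sum_compl_heavySet_le (w := w)
  set N : ℝ := (Fintype.card ι : ℝ)
  set σ : ℝ := (#(heavySet w) : ℝ)
  have hin : ∑ i ∈ heavySet w, w i ≤ σ / ((1 - ε) * N) := by
    simpa [div_eq_mul_one_div σ] using sum_le_card_nsmul _ _ _ fun i _ => hw.le_cap i
  have hsplit : ∑ i ∈ heavySet w, w i + ∑ i ∈ (heavySet w)ᶜ, w i = 1 := by
    rw [sum_add_sum_compl]; exact hw.sum_eq_one
  rw [le_div_iff₀ (by nlinarith)] at hin
  rw [le_div_iff₀ (by positivity)] at hout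
  have h1ε : 0 ≤ 1 - ε := by linarith
  have key : (1 - ε) * N ≤ (1 + ε) * σ := by
    have := congrArg (· * ((1 - ε) * N)) hsplit
    simp only [add_mul, one_mul] at this
    nlinarith [mul_le_mul_of_nonneg_left hout h1ε]
  nlinarith [mul_nonneg (mul_nonneg hε0 hε0) hN.le]

theorem sum_compl_heavySet_le_eps [DecidableEq ι] (hw : IsCappedWeight ε w) (hε0 : 0 ≤ ε)
    (hε1 : ε < 1) : ∑ i ∈ (heavySet w)ᶜ, w i ≤ ε := by
  have hN := hw.card_pos
  refine sum_compl_heavySet_le.trans ((div_le_iff₀ (by positivity)).mpr ?_)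
  linarith [hw.card_heavySet_ge hε0 hε1]

theorem card_div_three_le_card_heavySet (hw : IsCappedWeight ε w) (hε0 : 0 ≤ ε)
    (hε : ε ≤ 1 / 3) : (Fintype.card ι : ℝ) / 3 ≤ #(heavySet w) := by
  nlinarith [hw.card_heavySet_ge hε0 (by linarith), hw.card_pos]

theorem inv_card_heavySet_le (hw : IsCappedWeight ε w) (hε0 : 0 ≤ ε) (hε : ε ≤ 1 / 3) :
    (#(heavySet w) : ℝ)⁻¹ ≤ 3 / Fintype.card ι := by
  have hN := hw.card_pos
  simpa [inv_div] using inv_anti₀ (by positivity) (hw.card_div_three_le_card_heavySet hε0 hε)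

theorem inv_card_le_inv_card_heavySet (hw : IsCappedWeight ε w) (hε0 : 0 ≤ ε)
    (hε : ε ≤ 1 / 3) : (Fintype.card ι : ℝ)⁻¹ ≤ (#(heavySet w) : ℝ)⁻¹ := by
  have hN := hw.card_pos
  refine inv_anti₀ ?_ (by exact_mod_cast card_le_univ _)
  linarith [hw.card_div_three_le_card_heavySet hε0 hε]

theorem inv_card_mul_sum_heavySet_le (hw : IsCappedWeight ε w) (hε0 : 0 ≤ ε) (hε : ε ≤ 1 / 3)
    {a : ι → ℝ} (ha : ∀ i, 0 ≤ a i) :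
    (#(heavySet w) : ℝ)⁻¹ * ∑ i ∈ heavySet w, a i ≤ 6 * ∑ i, w i * a i := by
  have hN := hw.card_pos
  have hwa : ∀ i, 0 ≤ w i * a i := fun i => mul_nonneg (hw.nonneg i) (ha i)
  have hsum : ∑ i ∈ heavySet w, a i ≤ 2 * Fintype.card ι * ∑ i, w i * a i :=
    calc ∑ i ∈ heavySet w, a i ≤ ∑ i ∈ heavySet w, 2 * Fintype.card ι * (w i * a i) := by
          refine sum_le_sum fun i hi => ?_
          have := (div_le_iff₀ (by positivity)).mp (mem_heavySet.mp hi)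
          nlinarith [ha i]
      _ ≤ 2 * Fintype.card ι * ∑ i, w i * a i := by
          rw [← mul_sum]
          exact mul_le_mul_of_nonneg_left
            (sum_le_sum_of_subset_of_nonneg (subset_univ _) fun i _ _ => hwa i) (by positivity)
  calc (#(heavySet w) : ℝ)⁻¹ * ∑ i ∈ heavySet w, a i
      ≤ 3 / Fintype.card ι * (2 * Fintype.card ι * ∑ i, w i * a i) :=
        mul_le_mul (hw.inv_card_heavySet_le hε0 hε) hsum (sum_nonneg fun i _ => ha i)
          (by positivity)
    _ = 6 * ∑ i, w i * a i := by field_simp; ring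

theorem abs_inv_card_heavySet_sub_le (hw : IsCappedWeight ε w) (hε0 : 0 ≤ ε) (hε : ε ≤ 1 / 3)
    {i : ι} (hi : i ∈ heavySet w) :
    |(#(heavySet w) : ℝ)⁻¹ - w i| ≤ 5 / (2 * Fintype.card ι) := by
  have h1 := hw.inv_card_heavySet_le hε0 hε
  have h2 := hw.inv_card_le_inv_card_heavySet hε0 hε
  have h3 := mem_heavySet.mp hi
  have h4 := hw.le_one_add_div hε0 hε i
  simp only [div_eq_mul_inv, mul_inv, one_mul] at h1 h3 h4 ⊢
  rw [abs_le]
  constructor <;> nlinarith [inv_pos.mpr hw.card_pos]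

theorem sum_abs_inv_card_heavySet_sub_le (hw : IsCappedWeight ε w) (hε0 : 0 ≤ ε)
    (hε : ε ≤ 1 / 3) : ∑ i ∈ heavySet w, |(#(heavySet w) : ℝ)⁻¹ - w i| ≤ 4 * ε := by
  classical
  have hN := hw.card_pos
  have hσ : (0 : ℝ) < #(heavySet w) := by
    linarith [hw.card_div_three_le_card_heavySet hε0 hε]
  have hsum : ∑ i ∈ heavySet w, ((#(heavySet w) : ℝ)⁻¹ - w i) ≤ ε := by
    have hsplit := sum_add_sum_compl (heavySet w) w
    rw [hw.sum_eq_one] at hsplit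
    rw [sum_sub_distrib, sum_const, nsmul_eq_mul, mul_inv_cancel₀ hσ.ne']
    linarith [hw.sum_compl_heavySet_le_eps hε0 (by linarith)]
  have hneg : ∀ i, w i - (#(heavySet w) : ℝ)⁻¹ ≤ 3 / 2 * ε / Fintype.card ι := fun i => by
    have := hw.inv_card_le_inv_card_heavySet hε0 hε
    have := hw.le_one_add_div hε0 hε i
    rw [add_div, one_div] at this
    linarith
  calc ∑ i ∈ heavySet w, |(#(heavySet w) : ℝ)⁻¹ - w i|
      ≤ ∑ i ∈ heavySet w, (((#(heavySet w) : ℝ)⁻¹ - w i) + 3 * ε / Fintype.card ι) := by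
        refine sum_le_sum fun i _ => abs_le'.mpr ⟨?_, ?_⟩
        · have : 0 ≤ 3 * ε / Fintype.card ι := by positivity
          linarith
        · have : 3 * ε / Fintype.card ι = 2 * (3 / 2 * ε / Fintype.card ι) := by ring
          linarith [hneg i]
    _ = ∑ i ∈ heavySet w, ((#(heavySet w) : ℝ)⁻¹ - w i)
          + #(heavySet w) * (3 * ε / Fintype.card ι) := by
        rw [sum_add_distrib, sum_const, nsmul_eq_mul]
    _ ≤ ε + Fintype.card ι * (3 * ε / Fintype.card ι) := by
        gcongr
        exact_mod_cast card_le_univ _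
    _ = 4 * ε := by field_simp; ring

theorem sum_sq_uniformWeight_sub_div_le [DecidableEq ι] (hw : IsCappedWeight ε w) (hε0 : 0 ≤ ε)
    (hε : ε ≤ 1 / 3) : ∑ i, (uniformWeight (heavySet w) i - w i) ^ 2 / w i ≤ 21 * ε := by
  have hN := hw.card_pos
  have hheavy : ∀ i ∈ heavySet w,
      ((#(heavySet w) : ℝ)⁻¹ - w i) ^ 2 / w i ≤ 5 * |(#(heavySet w) : ℝ)⁻¹ - w i| := by
    intro i hi
    have hwi := mem_heavySet.mp hi
    have hb := hw.abs_inv_card_heavySet_sub_le hε0 hε hi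
    rw [div_le_iff₀ (lt_of_lt_of_le (by positivity) hwi), ← sq_abs, sq]
    calc |(#(heavySet w) : ℝ)⁻¹ - w i| * |(#(heavySet w) : ℝ)⁻¹ - w i|
        ≤ 5 / (2 * Fintype.card ι) * |(#(heavySet w) : ℝ)⁻¹ - w i| := by gcongr
      _ = 5 * |(#(heavySet w) : ℝ)⁻¹ - w i| * (1 / (2 * Fintype.card ι)) := by ring
      _ ≤ 5 * |(#(heavySet w) : ℝ)⁻¹ - w i| * w i := by gcongr
  rw [← sum_add_sum_compl (heavySet w)]
  calc ∑ i ∈ heavySet w, (uniformWeight (heavySet w) i - w i) ^ 2 / w i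
        + ∑ i ∈ (heavySet w)ᶜ, (uniformWeight (heavySet w) i - w i) ^ 2 / w i
      = ∑ i ∈ heavySet w, ((#(heavySet w) : ℝ)⁻¹ - w i) ^ 2 / w i
        + ∑ i ∈ (heavySet w)ᶜ, w i := by
        congr 1 <;> refine sum_congr rfl fun i hi => ?_
        · simp [uniformWeight, hi]
        · simp [uniformWeight, mem_compl.mp hi, sq, mul_self_div_self]
    _ ≤ 5 * (4 * ε) + ε := by
        gcongr
        · exact (sum_le_sum hheavy).trans
            (by rw [← mul_sum]; gcongr; exact hw.sum_abs_inv_card_heavySet_sub_le hε0 hε)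
        · exact hw.sum_compl_heavySet_le_eps hε0 (by linarith)
    _ = 21 * ε := by ring

theorem inv_card_mul_sum_heavySet_le_add (hw : IsCappedWeight ε w) (hε0 : 0 ≤ ε)
    (hε : ε ≤ 1 / 3) (a : ι → ℝ) :
    (#(heavySet w) : ℝ)⁻¹ * ∑ i ∈ heavySet w, a i
      ≤ ∑ i, w i * a i + √(21 * ε * ∑ i, w i * a i ^ 2) := by
  classical
  have hN := hw.card_pos
  have hsupp : ∀ i ∈ univ, w i = 0 → uniformWeight (heavySet w) i - w i = 0 := by
    intro i _ hwi
    have : i ∉ heavySet w := fun hi => by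
      have := mem_heavySet.mp hi
      rw [hwi] at this
      exact absurd this (not_le.mpr (by positivity))
    simp [uniformWeight, this, hwi]
  have hcs := sq_sum_mul_le_sum_sq_div_mul_sum_mul_sq univ _ w a (fun i _ => hw.nonneg i) hsupp
  have hdev : ∑ i, (uniformWeight (heavySet w) i - w i) * a i ≤ √(21 * ε * ∑ i, w i * a i ^ 2) :=
    (le_abs_self _).trans <| Real.abs_le_sqrt <| hcs.trans <| by
      gcongr
      · exact sum_nonneg fun i _ => mul_nonneg (hw.nonneg i) (sq_nonneg _)
      · exact hw.sum_sq_uniformWeight_sub_div_le hε0 hε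
  rw [← sum_uniformWeight_mul]
  simp only [sub_mul, sum_sub_distrib] at hdev
  linarith

end IsCappedWeight

end

theorem stmt13_general {d n : ℕ} (x : Fin n → EuclideanSpace ℝ (Fin d)) (ε δ : ℝ)
    (hε0 : 0 < ε) (hε : ε ≤ 1/3)
    (w : Fin n → ℝ) (hw0 : ∀ i, 0 ≤ w i) (hw1 : ∀ i, w i ≤ 1 / ((1 - ε) * n))
    (hws : ∑ i, w i = 1)
    (hmean : ‖∑ i, w i • x i‖ ≤ δ)
    (hcov : ∀ v : EuclideanSpace ℝ (Fin d), ‖v‖ = 1 →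
      |(∑ i, w i * (inner ℝ v (x i) : ℝ) ^ 2) - 1| ≤ δ ^ 2 / ε) :
    ∃ S₁ : Finset (Fin n), (1 - 2 * ε) * (n : ℝ) ≤ (S₁.card : ℝ) ∧
      ‖(S₁.card : ℝ)⁻¹ • ∑ i ∈ S₁, x i‖ ≤ 10 * δ + 10 * Real.sqrt ε ∧
      ∀ v : EuclideanSpace ℝ (Fin d), ‖v‖ = 1 →
        (S₁.card : ℝ)⁻¹ * ∑ i ∈ S₁, (inner ℝ v (x i) : ℝ) ^ 2 ≤ 9 * (1 + δ ^ 2 / ε) := by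
  have hw : IsCappedWeight ε w := ⟨hw0, by simpa using hw1, hws⟩
  have hδ : 0 ≤ δ := (norm_nonneg _).trans hmean
  have hcov_le : ∀ v : EuclideanSpace ℝ (Fin d), ‖v‖ = 1 →
      ∑ i, w i * inner ℝ v (x i) ^ 2 ≤ 1 + δ ^ 2 / ε :=
    fun v hv => by linarith [(abs_le.mp (hcov v hv)).2]
  refine ⟨heavySet w, by simpa using hw.card_heavySet_ge hε0.le (by linarith), ?_, fun v hv => ?_⟩
  · refine norm_le_of_forall_inner_le (by positivity) fun v hv => ?_
    have hmean_v : ∑ i, w i * inner ℝ v (x i) ≤ δ :=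
      calc ∑ i, w i * inner ℝ v (x i) = inner ℝ v (∑ i, w i • x i) := by
            simp [inner_sum, real_inner_smul_right]
        _ ≤ δ := (real_inner_le_norm _ _).trans (by rw [hv, one_mul]; exact hmean)
    calc inner ℝ v ((#(heavySet w) : ℝ)⁻¹ • ∑ i ∈ heavySet w, x i)
        = (#(heavySet w) : ℝ)⁻¹ * ∑ i ∈ heavySet w, inner ℝ v (x i) := by
          rw [real_inner_smul_right, inner_sum]
      _ ≤ ∑ i, w i * inner ℝ v (x i) + √(21 * ε * ∑ i, w i * inner ℝ v (x i) ^ 2) :=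
          hw.inv_card_mul_sum_heavySet_le_add hε0.le hε _
      _ ≤ δ + √(21 * ε * (1 + δ ^ 2 / ε)) := by gcongr; exact hcov_le v hv
      _ ≤ 10 * δ + 10 * √ε := add_sqrt_twentyOne_le hε0 hδ
  · calc (#(heavySet w) : ℝ)⁻¹ * ∑ i ∈ heavySet w, inner ℝ v (x i) ^ 2
        ≤ 6 * ∑ i, w i * inner ℝ v (x i) ^ 2 :=
          hw.inv_card_mul_sum_heavySet_le hε0.le hε fun i => sq_nonneg _
      _ ≤ 6 * (1 + δ ^ 2 / ε) := by gcongr; exact hcov_le v hv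
      _ ≤ 9 * (1 + δ ^ 2 / ε) := by gcongr; norm_num

theorem stmt13 {d n : ℕ} (x : Fin n → EuclideanSpace ℝ (Fin d)) (ε δ : ℝ)
    (hε0 : 0 < ε) (hε : ε ≤ 1/3) (hεδ : ε ≤ δ)
    (hint : ∃ m : ℕ, (m : ℝ) = ε * n)
    (w : Fin n → ℝ) (hw0 : ∀ i, 0 ≤ w i) (hw1 : ∀ i, w i ≤ 1 / ((1 - ε) * n))
    (hws : ∑ i, w i = 1)
    (hmean : ‖∑ i, w i • x i‖ ≤ δ)
    (hcov : ∀ v : EuclideanSpace ℝ (Fin d), ‖v‖ = 1 →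
      |(∑ i, w i * (inner ℝ v (x i) : ℝ) ^ 2) - 1| ≤ δ ^ 2 / ε) :
    ∃ S₁ : Finset (Fin n), (1 - 2 * ε) * (n : ℝ) ≤ (S₁.card : ℝ) ∧
      ‖(S₁.card : ℝ)⁻¹ • ∑ i ∈ S₁, x i‖ ≤ 10 * δ + 10 * Real.sqrt ε ∧
      ∀ v : EuclideanSpace ℝ (Fin d), ‖v‖ = 1 →
        (S₁.card : ℝ)⁻¹ * ∑ i ∈ S₁, (inner ℝ v (x i) : ℝ) ^ 2 ≤ 9 * (1 + δ ^ 2 / ε) :=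
  stmt13_general x ε δ hε0 hε w hw0 hw1 hws hmean hcov
end
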